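/- arXiv:2007.09575 — 4 statements merged into one kernel-verified Lean document; each statement's English description precedes it below -/
import Mathlib

section
/- Let A, B, C ∈ ℝ with C > 0, set s = √(C/2), let f : ℝ → ℝ be twice differentiable, and define g(x) = e^{s·cos 2x}·f(x). Then f''(x) + (A + B·cos 2x + C·cos 4x)·f(x) = 0 for all x ∈ ℝ if and only if g''(x) + 4s·sin 2x·g'(x) + ((A + C) + (B + 4s)·cos 2x)·g(x) = 0 for all x ∈ ℝ. -/
/-! Writing `g = e^φ f`, one has `g'' - 2φ'g' = e^φ (f'' + (φ'' - φ'²) f)` for any twice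
differentiable `φ`. For `φ = s cos 2x` the term `φ'' - φ'² = -4s cos 2x - 4s² sin² 2x` combines
with the Ince coefficients into `A + B cos 2x + C cos 4x`, because `C cos 4x = C - 4s² sin² 2x`
exactly when `C = 2s²`. Since `e^φ` never vanishes, the two equations hold together. -/

open Real

section ExpMul

variable {φ f : ℝ → ℝ}

theorem deriv_exp_comp_mul (hφ : Differentiable ℝ φ) (hf : Differentiable ℝ f) :
    deriv (fun x => exp (φ x) * f x) = fun x => exp (φ x) * (deriv f x + deriv φ x * f x) := by
  funext x
  refine ((hφ x).hasDerivAt.exp.mul (hf x).hasDerivAt).deriv.trans ?_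
  ring

theorem deriv_deriv_exp_comp_mul_sub (hφ : Differentiable ℝ φ) (hφ' : Differentiable ℝ (deriv φ))
    (hf : Differentiable ℝ f) (hf' : Differentiable ℝ (deriv f)) (x : ℝ) :
    deriv (deriv fun x => exp (φ x) * f x) x - 2 * deriv φ x * deriv (fun x => exp (φ x) * f x) x
      = exp (φ x) * (deriv (deriv f) x + (deriv (deriv φ) x - deriv φ x ^ 2) * f x) := by
  have hf₁ : Differentiable ℝ fun x => deriv f x + deriv φ x * f x := hf'.add (hφ'.mul hf)
  have hderiv_f₁ : deriv (fun x => deriv f x + deriv φ x * f x) x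
      = deriv (deriv f) x + (deriv (deriv φ) x * f x + deriv φ x * deriv f x) :=
    ((hf' x).hasDerivAt.add ((hφ' x).hasDerivAt.mul (hf x).hasDerivAt)).deriv
  rw [deriv_exp_comp_mul hφ hf, deriv_exp_comp_mul hφ hf₁]
  beta_reduce
  rw [hderiv_f₁]
  ring

end ExpMul

theorem deriv_const_mul_cos_two_mul (s : ℝ) :
    deriv (fun x => s * cos (2 * x)) = fun x => -(2 * s * sin (2 * x)) := by
  funext x
  refine (((hasDerivAt_cos (2 * x)).comp x
    ((hasDerivAt_id x).const_mul 2)).const_mul s).deriv.trans ?_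
  simp only [mul_one]
  ring

theorem deriv_neg_const_mul_sin_two_mul (s : ℝ) :
    deriv (fun x => -(2 * s * sin (2 * x))) = fun x => -(4 * s * cos (2 * x)) := by
  funext x
  refine (((hasDerivAt_sin (2 * x)).comp x
    ((hasDerivAt_id x).const_mul 2)).const_mul (2 * s)).neg.deriv.trans ?_
  simp only [mul_one]
  ring

theorem cos_four_mul_eq_one_sub_two_mul_sin_two_mul_sq (x : ℝ) :
    cos (4 * x) = 1 - 2 * sin (2 * x) ^ 2 := by
  rw [show 4 * x = 2 * (2 * x) by ring, cos_two_mul, cos_sq']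
  ring

theorem ince_operator_exp_mul_eq (A B s : ℝ) {f : ℝ → ℝ} (hf : Differentiable ℝ f)
    (hf' : Differentiable ℝ (deriv f)) (x : ℝ) :
    let g := fun x => exp (s * cos (2 * x)) * f x
    deriv (deriv g) x + 4 * s * sin (2 * x) * deriv g x
        + ((A + 2 * s ^ 2) + (B + 4 * s) * cos (2 * x)) * g x
      = exp (s * cos (2 * x))
        * (deriv (deriv f) x + (A + B * cos (2 * x) + 2 * s ^ 2 * cos (4 * x)) * f x) := by
  have hφ : Differentiable ℝ fun x => s * cos (2 * x) := by fun_prop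
  have hφ' : Differentiable ℝ (deriv fun x => s * cos (2 * x)) := by
    rw [deriv_const_mul_cos_two_mul]; fun_prop
  have key := deriv_deriv_exp_comp_mul_sub hφ hφ' hf hf' x
  rw [deriv_const_mul_cos_two_mul, deriv_neg_const_mul_sin_two_mul] at key
  simp only at key ⊢
  rw [cos_four_mul_eq_one_sub_two_mul_sin_two_mul_sq]
  linear_combination key

theorem stmt11 (A B C : ℝ) (hC : 0 < C) (s : ℝ) (hs : s = Real.sqrt (C / 2))
    (f : ℝ → ℝ) (hf : Differentiable ℝ f) (hf' : Differentiable ℝ (deriv f))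
    (g : ℝ → ℝ) (hg : ∀ x, g x = Real.exp (s * Real.cos (2 * x)) * f x) :
    (∀ x : ℝ,
      deriv (deriv f) x + (A + B * Real.cos (2 * x) + C * Real.cos (4 * x)) * f x = 0) ↔
    (∀ x : ℝ,
      deriv (deriv g) x + 4 * s * Real.sin (2 * x) * deriv g x +
        ((A + C) + (B + 4 * s) * Real.cos (2 * x)) * g x = 0) := by
  have hC_eq : C = 2 * s ^ 2 := by
    rw [hs, sq_sqrt (by positivity)]
    ring
  obtain rfl : g = fun x => exp (s * cos (2 * x)) * f x := funext hg
  subst hC_eq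
  simp only [ince_operator_exp_mul_eq A B s hf hf', mul_eq_zero, (exp_pos _).ne', false_or]
end

section
/- Let V : ℤ → ℂ satisfy V(m) = 0 for all odd m, and suppose Σ_{m∈ℤ} |V(m)|² < (1/9)². Then for every positive integer n and every real z with |z| ≤ 1, the series β_n(z) = V(2n) + Σ_{k=1}^{∞} Σ_{j_1,…,j_k} V(n−j_1)·V(j_1−j_2)⋯V(j_{k−1}−j_k)·V(j_k+n) / ((n²−j_1²+z)⋯(n²−j_k²+z)), where for each k the inner sum runs over all k-tuples of integers j_1, …, j_k with j_s ≡ n (mod 2) and j_s ∉ {n, −n}, converges absolutely: the sum over all k ≥ 1 and all such tuples of the absolute values of the summands is finite. -/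
open Real Finset

/-!
Every Fourier coefficient satisfies `‖V m‖ ≤ ‖v‖ < 1/9`. For an admissible index `j` both
`n - j` and `n + j` are nonzero even integers, so `|n² - j² + z| ≥ |n - j| |n + j| - 1` gives
`1 / |n² - j² + z| ≤ (2/3) (1/(n - j)² + 1/(n + j)²)`, and the right-hand side sums over
`j ∈ ℤ` to `4π²/9`. Hence the terms with `k + 1` indices sum to at most
`‖v‖ (‖v‖ · 4π²/9)^(k+1)`, a convergent geometric series because `‖v‖ · 4π²/9 < 1`.
-/

lemma hasSum_prod_fin_pi {α : Type*} {g : α → ℝ} {S : ℝ} (hg0 : ∀ a, 0 ≤ g a)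
    (hg : HasSum g S) (m : ℕ) : HasSum (fun f : Fin m → α => ∏ i, g (f i)) (S ^ m) := by
  induction m with
  | zero => simp
  | succ m ih =>
    have hsum : Summable fun x : α × (Fin m → α) => g x.1 * ∏ i, g (x.2 i) :=
      hg.summable.mul_of_nonneg (g := fun f : Fin m → α => ∏ i, g (f i)) ih.summable hg0
        fun f => prod_nonneg fun i _ => hg0 (f i)
    have hprod := hg.mul ih hsum
    rw [pow_succ', ← (Fin.consEquiv fun _ => α).hasSum_iff]
    exact hprod.congr_fun fun x => by simp [Fin.prod_univ_succ]

lemma summable_sigma_prod_of_tsum_lt_one {α : Type*} {f : α → ℝ} (hf0 : ∀ a, 0 ≤ f a)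
    (hf : Summable f) (hlt : ∑' a, f a < 1) :
    Summable fun p : Σ k : ℕ, Fin k → α => ∏ i, f (p.2 i) := by
  have hslice k := hasSum_prod_fin_pi hf0 hf.hasSum k
  refine (summable_sigma_of_nonneg fun p => prod_nonneg fun i _ => hf0 _).2
    ⟨fun k => (hslice k).summable, ?_⟩
  simpa only [(hslice _).tsum_eq] using summable_geometric_of_lt_one (tsum_nonneg hf0) hlt

/- The term at `j = 0` is `1 / 0 = 0`. -/
lemma hasSum_one_div_int_sq : HasSum (fun j : ℤ => 1 / (j : ℝ) ^ 2) (π ^ 2 / 3) := by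
  have h := hasSum_zeta_two.of_nat_of_neg (f := fun j : ℤ => 1 / (j : ℝ) ^ 2)
    (by simpa using hasSum_zeta_two)
  rwa [show π ^ 2 / 6 + π ^ 2 / 6 - 1 / ((0 : ℤ) : ℝ) ^ 2 = π ^ 2 / 3 by simp; ring] at h

lemma hasSum_one_div_sub_sq_add_one_div_add_sq (c : ℤ) :
    HasSum (fun j : ℤ => 1 / ((c : ℝ) - j) ^ 2 + 1 / ((c : ℝ) + j) ^ 2) (2 * π ^ 2 / 3) := by
  have hsub := (Equiv.subLeft c).hasSum_iff.2 hasSum_one_div_int_sq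
  have hadd := (Equiv.addLeft c).hasSum_iff.2 hasSum_one_div_int_sq
  convert hsub.add hadd using 1
  · ext j; simp
  · ring

lemma one_div_abs_mul_add_le {x y z : ℝ} (hx : 2 ≤ |x|) (hy : 2 ≤ |y|) (hz : |z| ≤ 1) :
    1 / |x * y + z| ≤ 2 / 3 * (1 / x ^ 2 + 1 / y ^ 2) := by
  have hxy : 4 ≤ |x| * |y| := by nlinarith
  have hlow : 3 / 4 * (|x| * |y|) ≤ |x * y + z| := by
    have := abs_sub_abs_le_abs_add (x * y) z
    rw [abs_mul] at this
    linarith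
  calc 1 / |x * y + z| ≤ 1 / (3 / 4 * (|x| * |y|)) :=
        one_div_le_one_div_of_le (by positivity) hlow
    _ ≤ 2 / 3 * (1 / |x| ^ 2 + 1 / |y| ^ 2) := by
      rw [div_add_div _ _ (by positivity) (by positivity), div_le_iff₀ (by positivity)]
      field_simp
      nlinarith [sq_nonneg (|x| - |y|)]
    _ = 2 / 3 * (1 / x ^ 2 + 1 / y ^ 2) := by rw [sq_abs, sq_abs]

lemma two_le_abs_of_two_dvd_of_ne_zero {m : ℤ} (h2 : 2 ∣ m) (h0 : m ≠ 0) :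
    (2 : ℝ) ≤ |(m : ℝ)| := by
  have : (2 : ℤ) ≤ |m| := by rcases abs_cases m with ⟨h, _⟩ | ⟨h, _⟩ <;> omega
  exact_mod_cast this

lemma one_div_abs_sq_sub_sq_add_le {c j : ℤ} {z : ℝ} (hz : |z| ≤ 1) (hpar : 2 ∣ j - c)
    (hjc : j ≠ c) (hjc' : j ≠ -c) :
    1 / |(c : ℝ) ^ 2 - (j : ℝ) ^ 2 + z| ≤
      2 / 3 * (1 / ((c : ℝ) - j) ^ 2 + 1 / ((c : ℝ) + j) ^ 2) := by
  have hx := two_le_abs_of_two_dvd_of_ne_zero (m := c - j) (by omega) (by omega)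
  have hy := two_le_abs_of_two_dvd_of_ne_zero (m := c + j) (by omega) (by omega)
  push_cast at hx hy
  convert one_div_abs_mul_add_le hx hy hz using 4
  ring

lemma norm_le_sqrt_tsum_sq {ι E : Type*} [SeminormedAddCommGroup E] {V : ι → E}
    (hV : Summable fun m => ‖V m‖ ^ 2) (m : ι) : ‖V m‖ ≤ √(∑' m, ‖V m‖ ^ 2) :=
  Real.le_sqrt_of_sq_le (hV.le_tsum m fun _ _ => sq_nonneg _)

lemma norm_chain_div_prod_abs_le {ι E : Type*} [SeminormedAddCommGroup E] {V : ι → E} {ε : ℝ}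
    (hV : ∀ m, ‖V m‖ ≤ ε) {k : ℕ} (a b : ι) (u : Fin k → ι) {d w : Fin (k + 1) → ℝ}
    (hdw : ∀ s, 1 / |d s| ≤ w s) :
    ‖V a‖ * (∏ s, ‖V (u s)‖) * ‖V b‖ / ∏ s, |d s| ≤ ε * ∏ s, ε * w s := by
  have hε : 0 ≤ ε := (norm_nonneg _).trans (hV a)
  have hnum : ‖V a‖ * (∏ s, ‖V (u s)‖) * ‖V b‖ ≤ ε ^ (k + 2) :=
    calc _ ≤ ε * (∏ _s : Fin k, ε) * ε := by gcongr <;> apply hV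
      _ = ε ^ (k + 2) := by rw [prod_const, card_univ, Fintype.card_fin]; ring
  calc _ = ‖V a‖ * (∏ s, ‖V (u s)‖) * ‖V b‖ * ∏ s, 1 / |d s| := by
        simp only [div_eq_mul_inv, one_mul, prod_inv_distrib]
    _ ≤ ε ^ (k + 2) * ∏ s, w s := by
        gcongr with s
        exact hdw s
    _ = ε * ∏ s, ε * w s := by
        rw [prod_mul_distrib, prod_const, card_univ, Fintype.card_fin]; ring

theorem stmt12_general (V : ℤ → ℂ)
    (hsummable : Summable fun m : ℤ => ‖V m‖ ^ 2)
    (hsmall : ∑' m : ℤ, ‖V m‖ ^ 2 < (1 / 9 : ℝ) ^ 2)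
    (n : ℕ) (z : ℝ) (hz : |z| ≤ 1) :
    Summable (fun p : Σ k : ℕ,
        {j : Fin (k + 1) → ℤ //
          ∀ s, (2 : ℤ) ∣ (j s - (n : ℤ)) ∧ j s ≠ (n : ℤ) ∧ j s ≠ -(n : ℤ)} =>
      (‖V ((n : ℤ) - p.2.1 0)‖ *
          (∏ s : Fin p.1, ‖V (p.2.1 s.castSucc - p.2.1 s.succ)‖) *
          ‖V (p.2.1 (Fin.last p.1) + (n : ℤ))‖) /
        ∏ s : Fin (p.1 + 1), |(n : ℝ) ^ 2 - ((p.2.1 s : ℤ) : ℝ) ^ 2 + z|) := by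
  set ε := √(∑' m : ℤ, ‖V m‖ ^ 2)
  have hVε : ∀ m, ‖V m‖ ≤ ε := norm_le_sqrt_tsum_sq hsummable
  have hε : ε < 1 / 9 := (Real.sqrt_lt' (by norm_num)).2 hsmall
  set w : ℤ → ℝ := fun j => 2 / 3 * (1 / ((n : ℝ) - j) ^ 2 + 1 / ((n : ℝ) + j) ^ 2)
  have hw : HasSum w (2 / 3 * (2 * π ^ 2 / 3)) := by
    simpa only [Int.cast_natCast] using
      (hasSum_one_div_sub_sq_add_one_div_add_sq n).mul_left (2 / 3)
  have hεw : ∑' j, ε * w j < 1 := by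
    rw [tsum_mul_left, hw.tsum_eq]
    nlinarith [pi_lt_four, pi_pos]
  have hG : Summable fun p : Σ k : ℕ, Fin k → ℤ => ε * ∏ i, ε * w (p.2 i) :=
    (summable_sigma_prod_of_tsum_lt_one (fun j => by positivity)
      (hw.summable.mul_left ε) hεw).mul_left ε
  refine Summable.of_nonneg_of_le (fun p => by positivity) (fun ⟨k, j, hj⟩ => ?_)
    (hG.comp_injective (Nat.succ_injective.sigma_map fun _ => Subtype.val_injective))
  refine norm_chain_div_prod_abs_le hVε _ _ _ fun s => ?_
  obtain ⟨hpar, hjn, hjn'⟩ := hj s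
  have hbound := one_div_abs_sq_sub_sq_add_le hz hpar hjn hjn'
  rw [Int.cast_natCast] at hbound
  exact hbound

theorem stmt12 (V : ℤ → ℂ) (hodd : ∀ m : ℤ, Odd m → V m = 0)
    (hsummable : Summable fun m : ℤ => ‖V m‖ ^ 2)
    (hsmall : ∑' m : ℤ, ‖V m‖ ^ 2 < (1 / 9 : ℝ) ^ 2)
    (n : ℕ) (hn : 0 < n) (z : ℝ) (hz : |z| ≤ 1) :
    Summable (fun p : Σ k : ℕ,
        {j : Fin (k + 1) → ℤ //
          ∀ s, (2 : ℤ) ∣ (j s - (n : ℤ)) ∧ j s ≠ (n : ℤ) ∧ j s ≠ -(n : ℤ)} =>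
      (‖V ((n : ℤ) - p.2.1 0)‖ *
          (∏ s : Fin p.1, ‖V (p.2.1 s.castSucc - p.2.1 s.succ)‖) *
          ‖V (p.2.1 (Fin.last p.1) + (n : ℤ))‖) /
        ∏ s : Fin (p.1 + 1), |(n : ℝ) ^ 2 - ((p.2.1 s : ℤ) : ℝ) ^ 2 + z|) :=
  stmt12_general V hsummable hsmall n z hz
end

section
/- Fix a positive integer n, let ξ ∈ X⁺ be a walk with ν+1 steps, let μ be a positive integer, and let (i_1, …, i_μ) be a μ-tuple of integers with i_s ≡ n (mod 2) and i_s ∉ {n, −n} for each s. Let X_ξ(i_1, …, i_μ) be the set of walks x ∈ X with ν+1+μ steps such that the tuple (i_1, …, i_μ) and the vertex sequence of ξ are complementary subsequences of the vertex sequence of x. Then the cardinality of X_ξ(i_1, …, i_μ) is at most 5^μ. -/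
open Real

noncomputable section

/-- The `s`-th interior vertex `j_{s+1} = -n + x_1 + ⋯ + x_{s+1}` of a walk starting at `-n`
with steps `step 0, …, step ν`. -/
def vertexOf (n : ℕ) {ν : ℕ} (step : Fin (ν + 1) → ℤ) (s : Fin ν) : ℤ :=
  -(n : ℤ) + ∑ k ∈ Finset.univ.filter (fun k : Fin (ν + 1) => (k : ℕ) ≤ (s : ℕ)), step k

/-- A walk from `-n` to `n` with `ν + 1` steps, each equal to `±2` or `±4`, whose interior
vertices avoid `±n`.  The set of all such walks is `X`. -/
structure Walk (n : ℕ) where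
  ν : ℕ
  step : Fin (ν + 1) → ℤ
  step_mem : ∀ k, step k = -4 ∨ step k = -2 ∨ step k = 2 ∨ step k = 4
  sum_eq : -(n : ℤ) + ∑ k, step k = (n : ℤ)
  vertex_ne : ∀ s : Fin ν, vertexOf n step s ≠ (n : ℤ) ∧ vertexOf n step s ≠ -(n : ℤ)

/-- A walk belongs to `X⁺` iff all its steps equal `2` or `4`. -/
def Walk.IsPos {n : ℕ} (w : Walk n) : Prop := ∀ k, w.step k = 2 ∨ w.step k = 4

/-- The tuple `i` and the vertex sequence of `ξ` are complementary subsequences of the vertex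
sequence of `x`. -/
def Complementary (n : ℕ) (ξ x : Walk n) {μ : ℕ} (i : Fin μ → ℤ) : Prop :=
  ∃ (e : Fin ξ.ν → Fin x.ν) (f : Fin μ → Fin x.ν),
    StrictMono e ∧ StrictMono f ∧ (∀ s t, e s ≠ f t) ∧
    (∀ p : Fin x.ν, (∃ s, e s = p) ∨ (∃ t, f t = p)) ∧
    (∀ s, vertexOf n x.step (e s) = vertexOf n ξ.step s) ∧
    (∀ t, vertexOf n x.step (f t) = i t)

/-!
Label the `t`-th inserted vertex of `x` by the step leaving it when that step lands on a vertex
of `ξ`, and by `0` otherwise; the labels lie in `{-4, -2, 0, 2, 4}`. Since the vertices of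
`ξ ∈ X⁺` strictly increase, a nonzero label identifies the vertex of `ξ` (value `i t` plus the
label) that follows the inserted vertex, hence its position in `x`; a zero label puts it just
before the next inserted vertex or at the end. Going backwards from the last inserted vertex, the
labels therefore fix where the `i t` sit, hence the vertex sequence of `x`, hence `x`.
-/

open Finset

theorem Finset.eq_of_forall_sum_Iic_eq {α M : Type*} [LinearOrder α] [LocallyFiniteOrderBot α]
    [WellFoundedLT α] [AddCommGroup M] {a b : α → M}
    (h : ∀ p, ∑ k ∈ Iic p, a k = ∑ k ∈ Iic p, b k) : a = b := by
  funext p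
  induction p using WellFoundedLT.induction with
  | _ p ih =>
    have hIio : ∑ k ∈ Iio p, a k = ∑ k ∈ Iio p, b k :=
      sum_congr rfl fun k hk => ih k (mem_Iio.mp hk)
    have hp := h p
    rw [← Iio_insert, sum_insert notMem_Iio_self, sum_insert notMem_Iio_self, hIio] at hp
    exact add_right_cancel hp

section vertexOf

variable {n ν : ℕ}

theorem vertexOf_eq_sum_Iic (step : Fin (ν + 1) → ℤ) (s : Fin ν) :
    vertexOf n step s = -n + ∑ k ∈ Iic s.castSucc, step k := by
  unfold vertexOf
  congr 2
  ext k
  simp [Fin.le_def]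

theorem vertexOf_of_val_eq_succ (step : Fin (ν + 1) → ℤ) {p q : Fin ν}
    (h : (q : ℕ) = p + 1) : vertexOf n step q = vertexOf n step p + step p.succ := by
  have hq : q.castSucc = p.succ := Fin.ext h
  have hIio : Iio p.succ = Iic p.castSucc := by ext k; simp [Fin.lt_def, Fin.le_def]
  rw [vertexOf_eq_sum_Iic, vertexOf_eq_sum_Iic, hq, ← Iio_insert, sum_insert notMem_Iio_self, hIio]
  ring

theorem vertexOf_strictMono {step : Fin (ν + 1) → ℤ} (h : ∀ k, 0 < step k) :
    StrictMono (vertexOf n step) := by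
  intro p q hpq
  rw [vertexOf_eq_sum_Iic, vertexOf_eq_sum_Iic, add_lt_add_iff_left]
  have hq : q.castSucc ∉ Iic p.castSucc := by simpa using hpq
  exact sum_lt_sum_of_subset (Iic_subset_Iic.mpr (Fin.castSucc_le_castSucc_iff.mpr hpq.le))
    (Finset.mem_Iic.mpr le_rfl) hq (h _) fun k _ _ => (h k).le

theorem eq_of_vertexOf_eq {a b : Fin (ν + 1) → ℤ} (ha : -(n : ℤ) + ∑ k, a k = n)
    (hb : -(n : ℤ) + ∑ k, b k = n) (h : vertexOf n a = vertexOf n b) : a = b := by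
  refine eq_of_forall_sum_Iic_eq fun p => ?_
  induction p using Fin.lastCases with
  | last => rw [← Fin.top_eq_last, Iic_top]; omega
  | cast s => have := congrFun h s; rw [vertexOf_eq_sum_Iic, vertexOf_eq_sum_Iic] at this; omega

end vertexOf

theorem Fin.val_eq_add_one_of_strictMono {μ N : ℕ} {f : Fin μ → Fin N} (hf : StrictMono f)
    {t u : Fin μ} (h : (f u : ℕ) = f t + 1) : (u : ℕ) = t + 1 := by
  have htu : t < u := hf.lt_iff_lt.mp (Fin.lt_def.mpr (by omega))
  by_contra hne
  have hm : t < ⟨t + 1, by omega⟩ ∧ (⟨t + 1, by omega⟩ : Fin μ) < u := by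
    simp only [Fin.lt_def] at htu ⊢; omega
  have h₁ := Fin.lt_def.mp (hf hm.1)
  have h₂ := Fin.lt_def.mp (hf hm.2)
  omega

structure IsShuffle {N ν μ : ℕ} (e : Fin ν → Fin N) (f : Fin μ → Fin N) : Prop where
  strictMono_left : StrictMono e
  strictMono_right : StrictMono f
  left_ne_right : ∀ s t, e s ≠ f t
  exists_left_or_right : ∀ p, (∃ s, e s = p) ∨ ∃ t, f t = p

namespace IsShuffle

variable {N ν μ : ℕ} {e e₁ e₂ : Fin ν → Fin N} {f f₁ f₂ : Fin μ → Fin N}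

theorem range_left (h : IsShuffle e f) : Set.range e = (Set.range f)ᶜ := by
  ext p
  refine ⟨?_, fun hp => (h.exists_left_or_right p).resolve_right hp⟩
  rintro ⟨s, rfl⟩ ⟨t, ht⟩
  exact h.left_ne_right s t ht.symm

theorem left_unique (h₁ : IsShuffle e₁ f) (h₂ : IsShuffle e₂ f) : e₁ = e₂ :=
  (h₁.strictMono_left.range_inj h₂.strictMono_left).mp (by rw [h₁.range_left, h₂.range_left])

theorem val_left_eq_add_card (h : IsShuffle e f) (s : Fin ν) :
    (e s : ℕ) = s + #{t | f t < e s} := by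
  have hsplit : Iio (e s) = (Iio s).image e ∪ ({t | f t < e s} : Finset _).image f := by
    ext p
    simp only [mem_Iio, mem_union, mem_image, mem_filter, mem_univ, true_and]
    constructor
    · intro hp
      rcases h.exists_left_or_right p with ⟨s', rfl⟩ | ⟨t, rfl⟩
      · exact Or.inl ⟨s', h.strictMono_left.lt_iff_lt.mp hp, rfl⟩
      · exact Or.inr ⟨t, hp, rfl⟩
    · rintro (⟨s', hs', rfl⟩ | ⟨t, ht, rfl⟩)
      · exact h.strictMono_left hs'
      · exact ht
  have hdisj : Disjoint ((Iio s).image e) (({t | f t < e s} : Finset _).image f) := by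
    simp only [disjoint_left, mem_image]
    rintro _ ⟨s', -, rfl⟩ ⟨t, -, ht⟩
    exact h.left_ne_right s' t ht.symm
  rw [← Fin.card_Iio, hsplit, card_union_of_disjoint hdisj,
    card_image_of_injective _ h.strictMono_left.injective,
    card_image_of_injective _ h.strictMono_right.injective, Fin.card_Iio]

theorem val_right_eq_add (h : IsShuffle e f) {s : Fin ν} {t : Fin μ}
    (hst : (e s : ℕ) = f t + 1) : (f t : ℕ) = s + t := by
  have hcard : #{u | f u < e s} = t + 1 := by
    have : ({u | f u < e s} : Finset _) = Iic t := by
      ext u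
      rw [mem_filter, mem_Iic, ← h.strictMono_right.le_iff_le, Fin.lt_def, Fin.le_def]
      simp only [mem_univ, true_and]
      omega
    rw [this, Fin.card_Iic]
  have := h.val_left_eq_add_card s
  omega

theorem right_succ_of_not_left (h : IsShuffle e f) {t : Fin μ}
    (hno : ¬ ∃ s, (e s : ℕ) = f t + 1) :
    (f t : ℕ) + 1 = N ∨ ∃ u : Fin μ, (u : ℕ) = t + 1 ∧ (f u : ℕ) = f t + 1 := by
  refine or_iff_not_imp_left.mpr fun hN => ?_
  have hlt : (f t : ℕ) + 1 < N := by omega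
  rcases h.exists_left_or_right ⟨f t + 1, hlt⟩ with ⟨s, hs⟩ | ⟨u, hu⟩
  · exact absurd ⟨s, congrArg Fin.val hs⟩ hno
  · have hu' : (f u : ℕ) = f t + 1 := congrArg Fin.val hu
    exact ⟨u, Fin.val_eq_add_one_of_strictMono h.strictMono_right hu', hu'⟩

theorem right_eq_of_left_succ_iff (h₁ : IsShuffle e₁ f₁) (h₂ : IsShuffle e₂ f₂)
    (hsucc : ∀ t s, (e₁ s : ℕ) = f₁ t + 1 ↔ (e₂ s : ℕ) = f₂ t + 1) : f₁ = f₂ := by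
  funext t
  induction t using WellFoundedGT.induction with
  | _ t ih =>
    by_cases hleft : ∃ s, (e₁ s : ℕ) = f₁ t + 1
    · obtain ⟨s, hs⟩ := hleft
      exact Fin.ext ((h₁.val_right_eq_add hs).trans (h₂.val_right_eq_add ((hsucc t s).mp hs)).symm)
    · have hleft₂ : ¬ ∃ s, (e₂ s : ℕ) = f₂ t + 1 := fun ⟨s, hs⟩ => hleft ⟨s, (hsucc t s).mpr hs⟩
      rcases h₁.right_succ_of_not_left hleft with hN₁ | ⟨u₁, hu₁, hf₁⟩ <;>
        rcases h₂.right_succ_of_not_left hleft₂ with hN₂ | ⟨u₂, hu₂, hf₂⟩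
      · exact Fin.ext (by omega)
      · have := (f₁ u₂).isLt
        have := Fin.lt_def.mp (h₁.strictMono_right (Fin.lt_def.mpr (by omega) : t < u₂))
        omega
      · have := (f₂ u₁).isLt
        have := Fin.lt_def.mp (h₂.strictMono_right (Fin.lt_def.mpr (by omega) : t < u₁))
        omega
      · have hu : u₁ = u₂ := Fin.ext (by omega)
        subst hu
        have := congrArg Fin.val (ih u₁ (Fin.lt_def.mpr (by omega)))
        exact Fin.ext (by omega)

end IsShuffle

namespace Walk

variable {n ν μ : ℕ}

def exitStep (x : Walk n) (e : Fin ν → Fin x.ν) (f : Fin μ → Fin x.ν) (t : Fin μ) : ℤ :=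
  if ∃ s, (e s : ℕ) = f t + 1 then x.step (f t).succ else 0

theorem exitStep_mem (x : Walk n) (e : Fin ν → Fin x.ν) (f : Fin μ → Fin x.ν) (t : Fin μ) :
    x.exitStep e f t ∈ ({-4, -2, 0, 2, 4} : Finset ℤ) := by
  unfold exitStep
  split_ifs
  · rcases x.step_mem (f t).succ with h | h | h | h <;> simp [h]
  · simp

theorem exitStep_eq_zero_iff (x : Walk n) {e : Fin ν → Fin x.ν} {f : Fin μ → Fin x.ν}
    {t : Fin μ} : x.exitStep e f t = 0 ↔ ¬ ∃ s, (e s : ℕ) = f t + 1 := by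
  unfold exitStep
  split_ifs with h
  · simp only [h, not_true_eq_false, iff_false]
    rcases x.step_mem (f t).succ with h | h | h | h <;> simp [h]
  · simp [h]

theorem exitStep_of_val_eq_succ (x : Walk n) {e : Fin ν → Fin x.ν} {f : Fin μ → Fin x.ν}
    {s : Fin ν} {t : Fin μ} (hst : (e s : ℕ) = f t + 1) :
    x.exitStep e f t = vertexOf n x.step (e s) - vertexOf n x.step (f t) := by
  rw [exitStep, if_pos ⟨s, hst⟩, vertexOf_of_val_eq_succ _ hst]
  ring

variable {ξ : Walk n} {i : Fin μ → ℤ} {x y : Walk n}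

theorem val_left_eq_succ_of_exitStep_eq (hξ : Function.Injective (vertexOf n ξ.step))
    {e₁ : Fin ξ.ν → Fin x.ν} {f₁ : Fin μ → Fin x.ν} {e₂ : Fin ξ.ν → Fin y.ν}
    {f₂ : Fin μ → Fin y.ν} (hv₁ : ∀ s, vertexOf n x.step (e₁ s) = vertexOf n ξ.step s)
    (hi₁ : ∀ t, vertexOf n x.step (f₁ t) = i t)
    (hv₂ : ∀ s, vertexOf n y.step (e₂ s) = vertexOf n ξ.step s)
    (hi₂ : ∀ t, vertexOf n y.step (f₂ t) = i t) {s : Fin ξ.ν} {t : Fin μ}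
    (h : x.exitStep e₁ f₁ t = y.exitStep e₂ f₂ t) (hs : (e₁ s : ℕ) = f₁ t + 1) :
    (e₂ s : ℕ) = f₂ t + 1 := by
  obtain ⟨s', hs'⟩ : ∃ s', (e₂ s' : ℕ) = f₂ t + 1 := by
    by_contra hno
    rw [← exitStep_eq_zero_iff, ← h, exitStep_eq_zero_iff] at hno
    exact hno ⟨s, hs⟩
  rw [exitStep_of_val_eq_succ x hs, exitStep_of_val_eq_succ y hs', hv₁, hi₁, hv₂, hi₂,
    sub_left_inj] at h
  rwa [hξ h]

theorem eq_of_exitStep_eq (hξ : Function.Injective (vertexOf n ξ.step)) (hν : x.ν = y.ν)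
    {e₁ : Fin ξ.ν → Fin x.ν} {f₁ : Fin μ → Fin x.ν} {e₂ : Fin ξ.ν → Fin y.ν}
    {f₂ : Fin μ → Fin y.ν} (h₁ : IsShuffle e₁ f₁) (h₂ : IsShuffle e₂ f₂)
    (hv₁ : ∀ s, vertexOf n x.step (e₁ s) = vertexOf n ξ.step s)
    (hi₁ : ∀ t, vertexOf n x.step (f₁ t) = i t)
    (hv₂ : ∀ s, vertexOf n y.step (e₂ s) = vertexOf n ξ.step s)
    (hi₂ : ∀ t, vertexOf n y.step (f₂ t) = i t)
    (h : x.exitStep e₁ f₁ = y.exitStep e₂ f₂) : x = y := by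
  obtain ⟨ν, a, _, ha, _⟩ := x
  obtain ⟨ν', b, _, hb, _⟩ := y
  dsimp only at hν
  subst hν
  have hf : f₁ = f₂ := h₁.right_eq_of_left_succ_iff h₂ fun t s =>
    ⟨val_left_eq_succ_of_exitStep_eq hξ hv₁ hi₁ hv₂ hi₂ (congrFun h t),
      val_left_eq_succ_of_exitStep_eq hξ hv₂ hi₂ hv₁ hi₁ (congrFun h t).symm⟩
  subst hf
  obtain rfl : e₁ = e₂ := h₁.left_unique h₂
  obtain rfl : a = b := by
    refine eq_of_vertexOf_eq ha hb (funext fun p => ?_)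
    rcases h₁.exists_left_or_right p with ⟨s, rfl⟩ | ⟨t, rfl⟩
    · exact (hv₁ s).trans (hv₂ s).symm
    · exact (hi₁ t).trans (hi₂ t).symm
  rfl

end Walk

theorem stmt13_general (n : ℕ) (ξ : Walk n) (hξ : ξ.IsPos)
    (μ : ℕ) (i : Fin μ → ℤ) :
    Nat.card {x : Walk n // x.ν = ξ.ν + μ ∧ Complementary n ξ x i} ≤ 5 ^ μ := by
  have hinj : Function.Injective (vertexOf n ξ.step) :=
    (vertexOf_strictMono fun k => by rcases hξ k with h | h <;> omega).injective
  have hshuffle : ∀ x : {x : Walk n // x.ν = ξ.ν + μ ∧ Complementary n ξ x i},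
      ∃ (e : Fin ξ.ν → Fin x.1.ν) (f : Fin μ → Fin x.1.ν), IsShuffle e f ∧
        (∀ s, vertexOf n x.1.step (e s) = vertexOf n ξ.step s) ∧
        ∀ t, vertexOf n x.1.step (f t) = i t := by
    rintro ⟨x, -, e, f, he, hf, hef, hcover, hv, hi⟩
    exact ⟨e, f, ⟨he, hf, hef, hcover⟩, hv, hi⟩
  choose e f hshuf hv hi using hshuffle
  let labels : Finset ℤ := {-4, -2, 0, 2, 4}
  let label (x : {x : Walk n // x.ν = ξ.ν + μ ∧ Complementary n ξ x i}) (t : Fin μ) : labels :=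
    ⟨x.1.exitStep (e x) (f x) t, x.1.exitStep_mem _ _ t⟩
  have hlabel : Function.Injective label := fun x y hxy =>
    Subtype.ext <| Walk.eq_of_exitStep_eq hinj (x.2.1.trans y.2.1.symm) (hshuf x) (hshuf y)
      (hv x) (hi x) (hv y) (hi y) (funext fun t => congrArg Subtype.val (congrFun hxy t))
  calc _ ≤ Nat.card (Fin μ → labels) := Nat.card_le_card_of_injective label hlabel
    _ = 5 ^ μ := by rw [Nat.card_fun, Nat.card_eq_finsetCard, Nat.card_fin]; rfl

theorem stmt13 (n : ℕ) (hn : 0 < n) (ξ : Walk n) (hξ : ξ.IsPos)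
    (μ : ℕ) (hμ : 0 < μ) (i : Fin μ → ℤ)
    (hi : ∀ t, (2 : ℤ) ∣ (i t - (n : ℤ)) ∧ i t ≠ (n : ℤ) ∧ i t ≠ -(n : ℤ)) :
    Nat.card {x : Walk n // x.ν = ξ.ν + μ ∧ Complementary n ξ x i} ≤ 5 ^ μ :=
  stmt13_general n ξ hξ μ i
end
end

section
/- For every integer m ≥ 3, Σ_{i=1}^{m−2} [ Π_{j=1}^{i} ((2m−1)² − (−2m+1+4j)²)^{−1} · Π_{j=i}^{m−2} ((2m−1)² − (−2m+3+4j)²)^{−1} ] + Π_{j=0}^{m−2} ((2m−1)² − (−2m+3+4j)²)^{−1} + Π_{j=1}^{m−1} ((2m−1)² − (−2m+1+4j)²)^{−1} = (8/2^{3m}) · [ (1/((2m−3)!!)²) · Σ_{i=1}^{m−2} ((2m−2i−3)!!·(2i−1)!!)/(i!·(m−1−i)!) + 2/((2m−3)!!·(m−1)!) ]. -/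
/-! Since `(2m-1)² - (-2m+1+4j)² = 8j(2m-1-2j)`, the partial products of the first family are
`P(i) = 8^i i! (2m-3)‼ / (2m-2i-3)‼`. The `j`-th factor of the second family is the `(m-1-j)`-th
factor of the first, so the `i`-th summand is `(P(i) P(m-1-i))⁻¹`, and the two extra terms are
the summands at `i = 0` and `i = m - 1`. -/

open Finset Nat

theorem Nat.doubleFactorial_mul_prod_range_odd (a i : ℕ) :
    (2 * a - 1)‼ * ∏ t ∈ range i, (2 * (a + t) + 1) = (2 * (a + i) - 1)‼ := by
  induction i with
  | zero => simp
  | succ i ih =>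
    rw [prod_range_succ, ← mul_assoc, ih, mul_comm,
      show 2 * (a + (i + 1)) - 1 = 2 * (a + i) + 1 by omega, doubleFactorial_add_one]

lemma prod_range_odd_eq_div (a i : ℕ) :
    ∏ t ∈ range i, (2 * ((a : ℝ) + t) + 1) = (2 * (a + i) - 1)‼ / (2 * a - 1)‼ := by
  rw [eq_div_iff (by positivity), mul_comm, ← Nat.doubleFactorial_mul_prod_range_odd]
  push_cast
  rfl

lemma prod_Icc_one_natCast_eq_factorial (i : ℕ) : ∏ j ∈ Icc 1 i, (j : ℝ) = i ! := by
  rw [← Ico_add_one_right_eq_Icc, ← Nat.cast_prod, prod_Ico_id_eq_factorial]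

lemma prod_Icc_one_odd_reflect (a i : ℕ) :
    ∏ j ∈ Icc 1 i, (2 * ((a : ℝ) + i) + 1 - 2 * j) =
      ∏ t ∈ range i, (2 * ((a : ℝ) + t) + 1) := by
  refine prod_nbij' (i - ·) (i - ·) ?_ ?_ ?_ ?_ ?_ <;> intro j hj <;>
    simp only [mem_Icc, mem_range] at hj ⊢
  iterate 4 omega
  rw [Nat.cast_sub hj.2]
  ring

lemma prod_Icc_one_sq_sub_sq_eq (m i : ℕ) (hi : i < m) :
    ∏ j ∈ Icc 1 i, ((2 * (m : ℝ) - 1) ^ 2 - (-(2 * (m : ℝ)) + 1 + 4 * (j : ℝ)) ^ 2) =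
      8 ^ i * i ! * (2 * m - 3)‼ / ((2 * m - 2 * i - 3)‼ : ℝ) := by
  obtain ⟨a, rfl⟩ : ∃ a, m = a + i + 1 := ⟨m - i - 1, by omega⟩
  calc _ = ∏ j ∈ Icc 1 i, (8 * (j : ℝ) * (2 * ((a : ℝ) + i) + 1 - 2 * j)) :=
        prod_congr rfl fun j _ => by push_cast; ring
    _ = 8 ^ i * i ! * ((2 * (a + i) - 1)‼ / (2 * a - 1)‼) := by
      rw [prod_mul_distrib, prod_mul_distrib, prod_const, card_Icc,
        prod_Icc_one_natCast_eq_factorial, prod_Icc_one_odd_reflect, prod_range_odd_eq_div,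
        add_tsub_cancel_right]
    _ = _ := by
      rw [← mul_div_assoc, show 2 * (a + i + 1) - 3 = 2 * (a + i) - 1 by omega,
        show 2 * (a + i + 1) - 2 * i - 3 = 2 * a - 1 by omega]

lemma prod_Icc_sq_sub_sq_three_eq_prod_Icc_one (m i : ℕ) (hm : 2 ≤ m) (hi : i < m) :
    ∏ j ∈ Icc i (m - 2), ((2 * (m : ℝ) - 1) ^ 2 - (-(2 * (m : ℝ)) + 3 + 4 * (j : ℝ)) ^ 2) =
      ∏ j ∈ Icc 1 (m - 1 - i),
        ((2 * (m : ℝ) - 1) ^ 2 - (-(2 * (m : ℝ)) + 1 + 4 * (j : ℝ)) ^ 2) := by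
  refine prod_nbij' (m - 1 - ·) (m - 1 - ·) ?_ ?_ ?_ ?_ ?_ <;> intro j hj <;>
    simp only [mem_Icc] at hj ⊢
  iterate 4 omega
  rw [Nat.cast_sub (by omega), Nat.cast_sub (by omega)]
  push_cast
  ring

lemma two_pow_three_mul_eq (m i : ℕ) (hi : i < m) :
    (2 : ℝ) ^ (3 * m) = 8 * 8 ^ i * 8 ^ (m - 1 - i) := by
  calc (2 : ℝ) ^ (3 * m) = 8 ^ (1 + i + (m - 1 - i)) := by
        rw [pow_mul, show 1 + i + (m - 1 - i) = m by omega]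
        norm_num
    _ = 8 * 8 ^ i * 8 ^ (m - 1 - i) := by rw [pow_add, pow_add, pow_one]

lemma prod_inv_mul_prod_inv_eq (m i : ℕ) (hm : 2 ≤ m) (hi : i < m) :
    (∏ j ∈ Icc 1 i, ((2 * (m : ℝ) - 1) ^ 2 - (-(2 * (m : ℝ)) + 1 + 4 * (j : ℝ)) ^ 2)⁻¹) *
      (∏ j ∈ Icc i (m - 2),
        ((2 * (m : ℝ) - 1) ^ 2 - (-(2 * (m : ℝ)) + 3 + 4 * (j : ℝ)) ^ 2)⁻¹) =
    8 / 2 ^ (3 * m) * (1 / ((2 * m - 3)‼ : ℝ) ^ 2 *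
      ((2 * m - 2 * i - 3)‼ * (2 * i - 1)‼ / (i ! * (m - 1 - i)!))) := by
  rw [prod_inv_distrib, prod_inv_distrib, prod_Icc_sq_sub_sq_three_eq_prod_Icc_one m i hm hi,
    prod_Icc_one_sq_sub_sq_eq m i hi, prod_Icc_one_sq_sub_sq_eq m (m - 1 - i) (by omega),
    show 2 * m - 2 * (m - 1 - i) - 3 = 2 * i - 1 by omega, two_pow_three_mul_eq m i hi]
  field_simp

theorem stmt17 (m : ℕ) (hm : 3 ≤ m) :
    (∑ i ∈ Finset.Icc 1 (m - 2),
        (∏ j ∈ Finset.Icc 1 i,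
            ((2 * (m : ℝ) - 1) ^ 2 - (-(2 * (m : ℝ)) + 1 + 4 * (j : ℝ)) ^ 2)⁻¹) *
          (∏ j ∈ Finset.Icc i (m - 2),
            ((2 * (m : ℝ) - 1) ^ 2 - (-(2 * (m : ℝ)) + 3 + 4 * (j : ℝ)) ^ 2)⁻¹)) +
      (∏ j ∈ Finset.Icc 0 (m - 2),
        ((2 * (m : ℝ) - 1) ^ 2 - (-(2 * (m : ℝ)) + 3 + 4 * (j : ℝ)) ^ 2)⁻¹) +
      (∏ j ∈ Finset.Icc 1 (m - 1),
        ((2 * (m : ℝ) - 1) ^ 2 - (-(2 * (m : ℝ)) + 1 + 4 * (j : ℝ)) ^ 2)⁻¹) =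
    (8 / 2 ^ (3 * m)) *
      ((1 / ((2 * m - 3).doubleFactorial : ℝ) ^ 2) *
          (∑ i ∈ Finset.Icc 1 (m - 2),
            ((2 * m - 2 * i - 3).doubleFactorial : ℝ) * ((2 * i - 1).doubleFactorial : ℝ) /
              ((i.factorial : ℝ) * ((m - 1 - i).factorial : ℝ))) +
        2 / (((2 * m - 3).doubleFactorial : ℝ) * ((m - 1).factorial : ℝ))) := by
  have hm2 : 2 ≤ m := by omega
  have first := prod_inv_mul_prod_inv_eq m 0 hm2 (by omega)
  have last := prod_inv_mul_prod_inv_eq m (m - 1) hm2 (by omega)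
  rw [Icc_eq_empty (show ¬1 ≤ 0 by omega), prod_empty, one_mul] at first
  rw [Icc_eq_empty (show ¬m - 1 ≤ m - 2 by omega), prod_empty, mul_one] at last
  rw [sum_congr rfl fun i hi => prod_inv_mul_prod_inv_eq m i hm2 (by rw [mem_Icc] at hi; omega),
    first, last, ← mul_sum, ← mul_sum]
  simp only [mul_zero, Nat.sub_zero, zero_tsub, show 2 * m - 2 * (m - 1) - 3 = 0 by omega,
    show 2 * (m - 1) - 1 = 2 * m - 3 by omega, Nat.sub_self, Nat.doubleFactorial, factorial_zero]
  field_simp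
  ring
end
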